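/- arXiv:1703.04121 — 3 statements merged into one kernel-verified Lean document; each statement's English description precedes it below -/
import Mathlib

section
/- For every vector X ∈ V and every 3-form T on V, the following identity holds in Cl(V): ∑_{j=1}^{n} T(X, e_j) · (e_j ⌟ T) = −(1/2) ∑_{j=1}^{n} e_j · (X ⌟ T) · (e_j ⌟ T) + (3/2) (X ⌟ T) · T. -/
/-!
Put `S = X ⌟ T`. The vector `T(X, eⱼ)` is the 1-form `eⱼ ⌟ S`, and for a 2-form `S` the Clifford
commutator with a vector is a contraction: `v·S - S·v = -2 (v ⌟ S)`. Substituting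
`T(X, eⱼ) = -½ (eⱼ·S - S·eⱼ)` splits the left side into `-½ ∑ eⱼ·S·(eⱼ ⌟ T)` and
`½ S·∑ eⱼ·(eⱼ ⌟ T)`. Since `eⱼ ⌟ eⱼ ⌟ T = 0`, the Clifford product `eⱼ·(eⱼ ⌟ T)` is the wedge
`eⱼ ∧ (eⱼ ⌟ T)`, so the last sum is the number operator, which multiplies 3-forms by 3.
-/

noncomputable section

open scoped RealInnerProductSpace

variable {V : Type*} [NormedAddCommGroup V] [InnerProductSpace ℝ V]

/-- The quadratic form `Q(v) = -⟨v,v⟩` on a real inner product space, so that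
`X·Y + Y·X = -2⟨X,Y⟩` holds in the Clifford algebra. -/
def negInnerQuadraticForm (V : Type*) [NormedAddCommGroup V] [InnerProductSpace ℝ V] :
    QuadraticForm ℝ V :=
  - LinearMap.BilinMap.toQuadraticMap (innerₗ V : LinearMap.BilinForm ℝ V)

/-- The interior product (contraction) `X ⌟ ω` of an exterior form `ω` by a vector `X`,
using the inner product to identify `X` with a dual vector. -/
def interiorProd (X : V) (ω : ExteriorAlgebra ℝ V) : ExteriorAlgebra ℝ V :=
  CliffordAlgebra.contractLeft (Q := (0 : QuadraticForm ℝ V))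
    (innerₗ V X) ω

/-- The canonical linear isomorphism from the exterior algebra to the Clifford algebra
`Cl(V)` of `Q(v) = -⟨v,v⟩`, sending `e_{i₁} ∧ ⋯ ∧ e_{iₚ}` (for orthonormal vectors) to the
Clifford product `e_{i₁} ⋯ e_{iₚ}`. -/
def exteriorToClifford (ω : ExteriorAlgebra ℝ V) :
    CliffordAlgebra (negInnerQuadraticForm V) :=
  letI : Invertible (2 : ℝ) := invertibleOfNonzero two_ne_zero
  (CliffordAlgebra.equivExterior (negInnerQuadraticForm V)).symm ω

/-- The submodule of `p`-forms, i.e. the `p`-th exterior power inside the exterior algebra. -/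
def pForms (V : Type*) [NormedAddCommGroup V] [InnerProductSpace ℝ V] (p : ℕ) :
    Submodule ℝ (ExteriorAlgebra ℝ V) :=
  LinearMap.range (ExteriorAlgebra.ι ℝ : V →ₗ[ℝ] ExteriorAlgebra ℝ V) ^ p

/-- Evaluation `T(X,Y,Z)` of a 3-form `T` (given as an element of the exterior algebra):
the scalar part of the triple contraction `Z ⌟ (Y ⌟ (X ⌟ T))`. -/
def eval3 (T : ExteriorAlgebra ℝ V) (X Y Z : V) : ℝ :=
  ExteriorAlgebra.algebraMapInv (interiorProd Z (interiorProd Y (interiorProd X T)))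

open CliffordAlgebra

local notation "Cl" => CliffordAlgebra (negInnerQuadraticForm V)

lemma pForms_zero : pForms V 0 = 1 := pow_zero _

lemma pForms_one : pForms V 1 = LinearMap.range (ExteriorAlgebra.ι ℝ) := pow_one _

lemma pForms_succ (p : ℕ) :
    pForms V (p + 1) = LinearMap.range (ExteriorAlgebra.ι ℝ) * pForms V p := pow_succ' _ _

lemma interiorProd_ι (v a : V) :
    interiorProd v (ExteriorAlgebra.ι ℝ a) = algebraMap ℝ _ ⟪v, a⟫ :=
  contractLeft_ι _ _ _

lemma interiorProd_algebraMap (v : V) (r : ℝ) :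
    interiorProd v (algebraMap ℝ (ExteriorAlgebra ℝ V) r) = 0 :=
  contractLeft_algebraMap _ _ _

lemma interiorProd_ι_mul (v a : V) (ω : ExteriorAlgebra ℝ V) :
    interiorProd v (ExteriorAlgebra.ι ℝ a * ω) =
      ⟪v, a⟫ • ω - ExteriorAlgebra.ι ℝ a * interiorProd v ω :=
  contractLeft_ι_mul _ _ _

lemma interiorProd_interiorProd (v : V) (ω : ExteriorAlgebra ℝ V) :
    interiorProd v (interiorProd v ω) = 0 :=
  contractLeft_contractLeft _ _

lemma interiorProd_add (v : V) (ω η : ExteriorAlgebra ℝ V) :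
    interiorProd v (ω + η) = interiorProd v ω + interiorProd v η :=
  map_add _ _ _

lemma interiorProd_mem_pForms {p : ℕ} {ω : ExteriorAlgebra ℝ V} (hω : ω ∈ pForms V (p + 1))
    (v : V) : interiorProd v ω ∈ pForms V p := by
  induction p generalizing ω with
  | zero =>
    obtain ⟨a, rfl⟩ := pForms_one (V := V) ▸ hω
    rw [interiorProd_ι, pForms_zero]
    exact Submodule.algebraMap_mem _
  | succ p ih =>
    rw [pForms_succ] at hω
    refine Submodule.mul_induction_on hω ?_ fun x y hx hy => ?_
    · rintro _ ⟨a, rfl⟩ y hy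
      rw [interiorProd_ι_mul]
      exact sub_mem (Submodule.smul_mem _ _ hy)
        (pForms_succ (V := V) p ▸ Submodule.mul_mem_mul ⟨a, rfl⟩ (ih hy))
    · rw [interiorProd_add]
      exact add_mem hx hy

lemma sum_ι_mul_interiorProd {κ : Type*} [Fintype κ] (e : OrthonormalBasis κ ℝ V) {p : ℕ}
    {ω : ExteriorAlgebra ℝ V} (hω : ω ∈ pForms V p) :
    ∑ j, ExteriorAlgebra.ι ℝ (e j) * interiorProd (e j) ω = (p : ℝ) • ω := by
  induction p generalizing ω with
  | zero =>
    obtain ⟨r, rfl⟩ := Submodule.mem_one.mp (pForms_zero (V := V) ▸ hω)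
    simp only [interiorProd_algebraMap, mul_zero, Finset.sum_const_zero, Nat.cast_zero, zero_smul]
  | succ p ih =>
    rw [pForms_succ] at hω
    refine Submodule.mul_induction_on hω ?_ fun x y hx hy => ?_
    · rintro _ ⟨a, rfl⟩ x hx
      have expand : ∑ j, ⟪e j, a⟫ • ExteriorAlgebra.ι ℝ (e j) = ExteriorAlgebra.ι ℝ a := by
        simp_rw [← map_smul, ← map_sum, e.sum_repr']
      calc ∑ j, ExteriorAlgebra.ι ℝ (e j) * interiorProd (e j) (ExteriorAlgebra.ι ℝ a * x)
          = ∑ j, (⟪e j, a⟫ • ExteriorAlgebra.ι ℝ (e j) * x +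
              ExteriorAlgebra.ι ℝ a * (ExteriorAlgebra.ι ℝ (e j) * interiorProd (e j) x)) := by
            refine Finset.sum_congr rfl fun j _ => ?_
            rw [interiorProd_ι_mul, mul_sub, ← mul_assoc,
              eq_neg_of_add_eq_zero_left (ExteriorAlgebra.ι_add_mul_swap (e j) a)]
            noncomm_ring
        _ = ExteriorAlgebra.ι ℝ a * x + ExteriorAlgebra.ι ℝ a * ((p : ℝ) • x) := by
            rw [Finset.sum_add_distrib, ← Finset.sum_mul, expand, ← Finset.mul_sum, ih hx]
        _ = ((p + 1 : ℕ) : ℝ) • (ExteriorAlgebra.ι ℝ a * x) := by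
            rw [mul_smul_comm]
            push_cast
            module
    · simp only [interiorProd_add, mul_add, Finset.sum_add_distrib, hx, hy, smul_add]

lemma associated_negInnerQuadraticForm :
    letI : Invertible (2 : ℝ) := invertibleOfNonzero two_ne_zero
    QuadraticMap.associated (negInnerQuadraticForm V) = -innerₗ V := by
  let : Invertible (2 : ℝ) := invertibleOfNonzero two_ne_zero
  rw [negInnerQuadraticForm, map_neg]
  congr 1
  exact QuadraticMap.associated_left_inverse ℝ fun x y => real_inner_comm y x

def exteriorToCliffordₗ : ExteriorAlgebra ℝ V →ₗ[ℝ] Cl :=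
  letI : Invertible (2 : ℝ) := invertibleOfNonzero two_ne_zero
  changeForm (changeForm.neg_proof (changeForm.associated_neg_proof (Q := negInnerQuadraticForm V)))

lemma exteriorToCliffordₗ_apply (ω : ExteriorAlgebra ℝ V) :
    exteriorToCliffordₗ ω = exteriorToClifford ω := rfl

lemma exteriorToClifford_ι (a : V) :
    exteriorToClifford (ExteriorAlgebra.ι ℝ a) = ι (negInnerQuadraticForm V) a :=
  letI : Invertible (2 : ℝ) := invertibleOfNonzero two_ne_zero
  changeForm_ι (changeForm.neg_proof changeForm.associated_neg_proof) a

lemma exteriorToClifford_algebraMap (r : ℝ) :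
    exteriorToClifford (algebraMap ℝ (ExteriorAlgebra ℝ V) r) = algebraMap ℝ Cl r :=
  letI : Invertible (2 : ℝ) := invertibleOfNonzero two_ne_zero
  changeForm_algebraMap (changeForm.neg_proof changeForm.associated_neg_proof) r

lemma exteriorToClifford_ι_mul (a : V) (ω : ExteriorAlgebra ℝ V) :
    exteriorToClifford (ExteriorAlgebra.ι ℝ a * ω) =
      ι (negInnerQuadraticForm V) a * exteriorToClifford ω +
        exteriorToClifford (interiorProd a ω) := by
  let : Invertible (2 : ℝ) := invertibleOfNonzero two_ne_zero
  simp only [← exteriorToCliffordₗ_apply, exteriorToCliffordₗ, interiorProd, changeForm_ι_mul,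
    changeForm_contractLeft, associated_negInnerQuadraticForm, map_neg, LinearMap.neg_apply,
    neg_neg, sub_neg_eq_add]

lemma ι_mul_exteriorToClifford_interiorProd_self (v : V) (ω : ExteriorAlgebra ℝ V) :
    ι (negInnerQuadraticForm V) v * exteriorToClifford (interiorProd v ω) =
      exteriorToClifford (ExteriorAlgebra.ι ℝ v * interiorProd v ω) := by
  rw [exteriorToClifford_ι_mul, interiorProd_interiorProd, ← exteriorToCliffordₗ_apply 0, map_zero,
    add_zero]

lemma sum_ι_mul_exteriorToClifford_interiorProd {κ : Type*} [Fintype κ]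
    (e : OrthonormalBasis κ ℝ V) {p : ℕ} {ω : ExteriorAlgebra ℝ V} (hω : ω ∈ pForms V p) :
    ∑ j, ι (negInnerQuadraticForm V) (e j) * exteriorToClifford (interiorProd (e j) ω) =
      (p : ℝ) • exteriorToClifford ω := by
  calc ∑ j, ι (negInnerQuadraticForm V) (e j) * exteriorToClifford (interiorProd (e j) ω)
      = exteriorToClifford (∑ j, ExteriorAlgebra.ι ℝ (e j) * interiorProd (e j) ω) := by
        simp only [ι_mul_exteriorToClifford_interiorProd_self]
        simp only [← exteriorToCliffordₗ_apply, map_sum]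
    _ = (p : ℝ) • exteriorToClifford ω := by
        rw [sum_ι_mul_interiorProd e hω, ← exteriorToCliffordₗ_apply, map_smul]
        rfl

lemma ι_mul_ι_add_swap_negInner (x y : V) :
    ι (negInnerQuadraticForm V) x * ι (negInnerQuadraticForm V) y +
        ι (negInnerQuadraticForm V) y * ι (negInnerQuadraticForm V) x =
      (-2 * ⟪x, y⟫) • (1 : Cl) := by
  rw [ι_mul_ι_add_swap, Algebra.algebraMap_eq_smul_one]
  congr 1
  change -⟪x + y, x + y⟫ - -⟪x, x⟫ - -⟪y, y⟫ = _
  rw [real_inner_add_add_self]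
  ring

lemma ι_mul_exteriorToClifford_sub_exteriorToClifford_mul_ι {S : ExteriorAlgebra ℝ V}
    (hS : S ∈ pForms V 2) (v : V) :
    ι (negInnerQuadraticForm V) v * exteriorToClifford S -
        exteriorToClifford S * ι (negInnerQuadraticForm V) v =
      (-2 : ℝ) • exteriorToClifford (interiorProd v S) := by
  rw [pForms, pow_two] at hS
  refine Submodule.mul_induction_on hS ?_ fun S₁ S₂ h₁ h₂ => ?_
  · rintro _ ⟨x, rfl⟩ _ ⟨y, rfl⟩
    set ι' := ι (negInnerQuadraticForm V)
    have hcl : exteriorToClifford (ExteriorAlgebra.ι ℝ x * ExteriorAlgebra.ι ℝ y) =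
        ι' x * ι' y + ⟪x, y⟫ • 1 := by
      rw [exteriorToClifford_ι_mul, exteriorToClifford_ι, interiorProd_ι,
        exteriorToClifford_algebraMap, Algebra.algebraMap_eq_smul_one]
    have hint : interiorProd v (ExteriorAlgebra.ι ℝ x * ExteriorAlgebra.ι ℝ y) =
        ⟪v, x⟫ • ExteriorAlgebra.ι ℝ y - ⟪v, y⟫ • ExteriorAlgebra.ι ℝ x := by
      rw [interiorProd_ι_mul, interiorProd_ι, Algebra.algebraMap_eq_smul_one, mul_smul_comm,
        mul_one]
    have hcomm : ∀ (a b c : Cl) (r : ℝ),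
        a * (b * c + r • 1) - (b * c + r • 1) * a = (a * b + b * a) * c - b * (a * c + c * a) := by
      intro a b c r
      simp only [mul_add, add_mul, mul_smul_comm, smul_mul_assoc, mul_one, one_mul]
      noncomm_ring
    rw [hcl, hint, hcomm, ι_mul_ι_add_swap_negInner, ι_mul_ι_add_swap_negInner]
    simp only [← exteriorToCliffordₗ_apply, map_sub, map_smul]
    simp only [exteriorToCliffordₗ_apply, exteriorToClifford_ι, smul_mul_assoc, one_mul,
      mul_smul_comm, mul_one]
    module
  · simp only [← exteriorToCliffordₗ_apply, map_add, interiorProd_add] at h₁ h₂ ⊢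
    rw [mul_add, add_mul, smul_add, ← h₁, ← h₂]
    abel

lemma eval3_eq_inner_of_interiorProd_eq_ι {T : ExteriorAlgebra ℝ V} {X Y w : V}
    (h : interiorProd Y (interiorProd X T) = ExteriorAlgebra.ι ℝ w) (Z : V) :
    eval3 T X Y Z = ⟪w, Z⟫ := by
  rw [eval3, h, interiorProd_ι, ExteriorAlgebra.algebraMap_leftInverse, real_inner_comm]

lemma ι_eq_exteriorToClifford_of_inner_eq_eval3 {T : ExteriorAlgebra ℝ V} (hT : T ∈ pForms V 3)
    {X Y t : V} (ht : ∀ Z, ⟪t, Z⟫ = eval3 T X Y Z) :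
    ι (negInnerQuadraticForm V) t = exteriorToClifford (interiorProd Y (interiorProd X T)) := by
  obtain ⟨w, hw⟩ : interiorProd Y (interiorProd X T) ∈ LinearMap.range (ExteriorAlgebra.ι ℝ) :=
    pForms_one (V := V) ▸ interiorProd_mem_pForms (interiorProd_mem_pForms hT X) Y
  have htw : t = w :=
    ext_inner_right ℝ fun Z => (ht Z).trans (eval3_eq_inner_of_interiorProd_eq_ι hw.symm Z)
  rw [← hw, exteriorToClifford_ι, htw]

/-- For a 3-form `T` and any vector `X`:
`∑ⱼ T(X,eⱼ)·(eⱼ ⌟ T) = -(1/2) ∑ⱼ eⱼ·(X ⌟ T)·(eⱼ ⌟ T) + (3/2) (X ⌟ T)·T` in `Cl(V)`,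
where `T(X,Y)` is the vector determined by `⟨T(X,Y), Z⟩ = T(X,Y,Z)` for all `Z`. -/
theorem stmt2 {n : ℕ} (e : OrthonormalBasis (Fin n) ℝ V)
    (T : ExteriorAlgebra ℝ V) (hT : T ∈ pForms V 3)
    (TV : V → V → V) (hTV : ∀ X Y Z : V, ⟪TV X Y, Z⟫ = eval3 T X Y Z)
    (X : V) :
    ∑ j : Fin n, CliffordAlgebra.ι (negInnerQuadraticForm V) (TV X (e j)) *
        exteriorToClifford (interiorProd (e j) T) =
      -(1/2 : ℝ) • ∑ j : Fin n,
          CliffordAlgebra.ι (negInnerQuadraticForm V) (e j) *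
            exteriorToClifford (interiorProd X T) *
            exteriorToClifford (interiorProd (e j) T) +
        (3/2 : ℝ) • (exteriorToClifford (interiorProd X T) * exteriorToClifford T) := by
  set ι' := ι (negInnerQuadraticForm V)
  set S := exteriorToClifford (interiorProd X T)
  have hTV_eq_commutator :
      ∀ j, ι' (TV X (e j)) = (-(1/2) : ℝ) • (ι' (e j) * S - S * ι' (e j)) := fun j => by
    rw [ι_eq_exteriorToClifford_of_inner_eq_eval3 hT (hTV X (e j)),
      ι_mul_exteriorToClifford_sub_exteriorToClifford_mul_ι (interiorProd_mem_pForms hT X),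
      smul_smul]
    norm_num
  calc ∑ j, ι' (TV X (e j)) * exteriorToClifford (interiorProd (e j) T)
      = -(1/2 : ℝ) • ∑ j, ι' (e j) * S * exteriorToClifford (interiorProd (e j) T) +
          (1/2 : ℝ) • (S * ∑ j, ι' (e j) * exteriorToClifford (interiorProd (e j) T)) := by
        simp only [hTV_eq_commutator, Finset.mul_sum, Finset.smul_sum, ← Finset.sum_add_distrib,
          smul_mul_assoc, sub_mul, mul_assoc]
        refine Finset.sum_congr rfl fun j _ => ?_
        module
    _ = _ := by
        rw [sum_ι_mul_exteriorToClifford_interiorProd e hT, mul_smul_comm, smul_smul]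
        norm_num
end
end

section
/- Let T be a 3-form on V. Then for every vector X ∈ V the following identity holds in Cl(V): ∑_{j=1}^{n} e_j · (T(X, e_j) ⌟ T) = −∑_{j=1}^{n} T(X, e_j) · (e_j ⌟ T). -/
noncomputable section

open scoped RealInnerProductSpace

variable {V : Type*} [NormedAddCommGroup V] [InnerProductSpace ℝ V]

/-! Expanding `T(X,eⱼ) = ∑ᵢ T(X,eⱼ,eᵢ) eᵢ` turns both sides into double sums of
`T(X,eⱼ,eᵢ) eⱼ·(eᵢ ⌟ T)`, with `i` and `j` exchanged on the right; antisymmetry of `T` in its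
last two arguments then supplies the sign. -/

theorem Finset.sum_sum_smul_eq_neg_of_antisymm {ι R M : Type*} [Fintype ι] [Ring R]
    [AddCommGroup M] [Module R M] {c : ι → ι → R} (hc : ∀ i j, c i j = -c j i)
    (f : ι → ι → M) :
    ∑ j, ∑ i, c j i • f j i = -∑ j, ∑ i, c j i • f i j := by
  rw [Finset.sum_comm (f := fun j i => c j i • f i j), ← Finset.sum_neg_distrib]
  refine Finset.sum_congr rfl fun j _ => ?_
  rw [← Finset.sum_neg_distrib]
  refine Finset.sum_congr rfl fun i _ => ?_
  rw [hc, neg_smul]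

theorem eval3_swap (T : ExteriorAlgebra ℝ V) (X Y Z : V) :
    eval3 T X Y Z = -eval3 T X Z Y := by
  simp only [eval3, interiorProd]
  rw [CliffordAlgebra.contractLeft_comm, map_neg]

theorem interiorProd_sum_smul {ι : Type*} (s : Finset ι) (c : ι → ℝ) (v : ι → V)
    (ω : ExteriorAlgebra ℝ V) :
    interiorProd (∑ i ∈ s, c i • v i) ω = ∑ i ∈ s, c i • interiorProd (v i) ω := by
  simp only [interiorProd, map_sum, map_smul, LinearMap.sum_apply, LinearMap.smul_apply]

theorem OrthonormalBasis.eq_sum_of_inner_eq {ι : Type*} [Fintype ι]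
    (e : OrthonormalBasis ι ℝ V) {v : V} {f : V → ℝ} (hv : ∀ Z, ⟪v, Z⟫ = f Z) :
    v = ∑ i, f (e i) • e i := by
  conv_lhs => rw [← e.sum_repr' v]
  simp only [real_inner_comm, hv]

theorem stmt6_general {n : ℕ} (e : OrthonormalBasis (Fin n) ℝ V)
    (T : ExteriorAlgebra ℝ V)
    (TV : V → V → V) (hTV : ∀ X Y Z : V, ⟪TV X Y, Z⟫ = eval3 T X Y Z)
    (X : V) :
    ∑ j : Fin n, CliffordAlgebra.ι (negInnerQuadraticForm V) (e j) *
        exteriorToClifford (interiorProd (TV X (e j)) T) =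
      -∑ j : Fin n, CliffordAlgebra.ι (negInnerQuadraticForm V) (TV X (e j)) *
        exteriorToClifford (interiorProd (e j) T) := by
  have hexp : ∀ j, TV X (e j) = ∑ i, eval3 T X (e j) (e i) • e i :=
    fun j => e.eq_sum_of_inner_eq (hTV X (e j))
  simp only [hexp, interiorProd_sum_smul, exteriorToClifford, map_sum, map_smul,
    Finset.mul_sum, Finset.sum_mul, mul_smul_comm, smul_mul_assoc]
  exact Finset.sum_sum_smul_eq_neg_of_antisymm (fun j i => eval3_swap T X (e j) (e i)) _

/-- For a 3-form `T` and every vector `X`: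
`∑ⱼ eⱼ·(T(X,eⱼ) ⌟ T) = -∑ⱼ T(X,eⱼ)·(eⱼ ⌟ T)` in `Cl(V)`, where `T(X,Y)` is the vector
determined by `⟨T(X,Y), Z⟩ = T(X,Y,Z)` for all `Z`. -/
theorem stmt6 {n : ℕ} (e : OrthonormalBasis (Fin n) ℝ V)
    (T : ExteriorAlgebra ℝ V) (hT : T ∈ pForms V 3)
    (TV : V → V → V) (hTV : ∀ X Y Z : V, ⟪TV X Y, Z⟫ = eval3 T X Y Z)
    (X : V) :
    ∑ j : Fin n, CliffordAlgebra.ι (negInnerQuadraticForm V) (e j) *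
        exteriorToClifford (interiorProd (TV X (e j)) T) =
      -∑ j : Fin n, CliffordAlgebra.ι (negInnerQuadraticForm V) (TV X (e j)) *
        exteriorToClifford (interiorProd (e j) T) :=
  stmt6_general e T TV hTV X
end
end

section
/- If the dimension of V is at most 4, then for every 3-form T on V the 4-form σ_T := (1/2) ∑_{i} (e_i ⌟ T) ∧ (e_i ⌟ T) vanishes identically. -/
noncomputable section

open scoped RealInnerProductSpace

variable {V : Type*} [NormedAddCommGroup V] [InnerProductSpace ℝ V]

/-!
Each summand vanishes on its own. For a 3-form `T` and `β = X ⌟ T`, the graded Leibniz rule for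
the contraction gives `X ⌟ (T ∧ β) = β ∧ β - T ∧ (X ⌟ β) = β ∧ β`, because `X ⌟ X ⌟ = 0`.
But `T ∧ β` is a 5-form, hence zero when `dim V ≤ 4`.
-/

open ExteriorAlgebra CliffordAlgebra

section Contraction

variable {R M : Type*} [CommRing R] [AddCommGroup M] [Module R M] (d : Module.Dual R M)

theorem contractLeft_mul_of_mem_exteriorPower {p : ℕ} {x : ExteriorAlgebra R M}
    (hx : x ∈ ⋀[R]^p M) (y : ExteriorAlgebra R M) :
    contractLeft d (x * y) = contractLeft d x * y + (-1 : R) ^ p • (x * contractLeft d y) := by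
  induction hx using Submodule.pow_induction_on_left' generalizing y with
  | algebraMap r =>
    rw [contractLeft_algebraMap_mul, contractLeft_algebraMap, zero_mul, zero_add, pow_zero,
      one_smul]
  | add x x' i _ _ ihx ihx' =>
    rw [add_mul, map_add, ihx, ihx', map_add, add_mul, add_mul, smul_add]
    abel
  | mem_mul m hm i x _ ih =>
    obtain ⟨a, rfl⟩ := hm
    rw [mul_assoc, contractLeft_ι_mul, ih, contractLeft_ι_mul]
    simp only [mul_add, sub_mul, smul_mul_assoc, mul_smul_comm, mul_assoc, pow_succ, mul_neg_one,
      neg_smul]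
    module

theorem contractLeft_mem_exteriorPower {p : ℕ} {x : ExteriorAlgebra R M}
    (hx : x ∈ ⋀[R]^(p + 1) M) : contractLeft d x ∈ ⋀[R]^p M := by
  induction p generalizing x with
  | zero =>
    obtain ⟨a, rfl⟩ := (pow_one (LinearMap.range (ι R))).le hx
    rw [contractLeft_ι]
    exact SetLike.algebraMap_mem_graded _ _
  | succ q ih =>
    rw [exteriorPower, pow_succ'] at hx
    refine Submodule.mul_induction_on hx ?_
      fun x y hx hy => map_add (contractLeft d) x y ▸ add_mem hx hy
    rintro _ ⟨a, rfl⟩ y hy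
    rw [contractLeft_ι_mul]
    refine sub_mem (Submodule.smul_mem _ _ hy) ?_
    rw [exteriorPower, pow_succ']
    exact Submodule.mul_mem_mul (LinearMap.mem_range_self _ a) (ih hy)

theorem contractLeft_mul_contractLeft_self {p : ℕ} {x : ExteriorAlgebra R M}
    (hx : x ∈ ⋀[R]^p M) :
    contractLeft d (x * contractLeft d x) = contractLeft d x * contractLeft d x := by
  rw [contractLeft_mul_of_mem_exteriorPower d hx, contractLeft_contractLeft, mul_zero, smul_zero,
    add_zero]

end Contraction

section FiniteDimensional

variable {K V : Type*} [Field K] [AddCommGroup V] [Module K V] [FiniteDimensional K V]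

theorem exteriorPower_eq_bot_of_finrank_lt {n : ℕ} (h : Module.finrank K V < n) :
    ⋀[K]^n V = ⊥ := by
  rw [← Submodule.finrank_eq_zero, exteriorPower.finrank_eq, Nat.choose_eq_zero_of_lt h]

theorem contractLeft_mul_contractLeft_eq_zero_of_finrank_lt (d : Module.Dual K V) {p : ℕ}
    {x : ExteriorAlgebra K V} (hx : x ∈ ⋀[K]^(p + 1) V) (h : Module.finrank K V < 2 * p + 1) :
    contractLeft d x * contractLeft d x = 0 := by
  have h_mem : x * contractLeft d x ∈ ⋀[K]^(p + 1 + p) V :=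
    SetLike.mul_mem_graded hx (contractLeft_mem_exteriorPower d hx)
  rw [exteriorPower_eq_bot_of_finrank_lt (by omega), Submodule.mem_bot] at h_mem
  rw [← contractLeft_mul_contractLeft_self d hx, h_mem, map_zero]

end FiniteDimensional

/-- If `dim V ≤ 4`, then `σ_T := (1/2) ∑ᵢ (eᵢ ⌟ T) ∧ (eᵢ ⌟ T)` vanishes for every 3-form `T`. -/
theorem stmt14 {n : ℕ} (hn : n ≤ 4) (e : OrthonormalBasis (Fin n) ℝ V)
    (T : ExteriorAlgebra ℝ V) (hT : T ∈ pForms V 3) :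
    (1/2 : ℝ) • ∑ i : Fin n, interiorProd (e i) T * interiorProd (e i) T = 0 := by
  have : FiniteDimensional ℝ V := e.toBasis.finiteDimensional_of_finite
  have hdim : Module.finrank ℝ V < 2 * 2 + 1 := by
    rw [Module.finrank_eq_card_basis e.toBasis, Fintype.card_fin]
    omega
  simp only [interiorProd, contractLeft_mul_contractLeft_eq_zero_of_finrank_lt _ hT hdim,
    Finset.sum_const_zero, smul_zero]
end
end
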